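/- arXiv:2006.14813 — 10 statements merged into one kernel-verified Lean document; each statement's English description precedes it below -/
import Mathlib

section
/- Let T : Fin m → Fin p → Fin n → ℍ be an m×p×n quaternion tensor with frontal slices A₁,…,A_p, and let r be a natural number. Then T has rank at most r if and only if there exist a matrix P ∈ Matrix (Fin m) (Fin r) ℍ, a matrix Q ∈ Matrix (Fin r) (Fin n) ℍ, and diagonal matrices D₁,…,D_p ∈ Matrix (Fin r) (Fin r) ℍ such that A_k = P * D_k * Q for every k = 1,…,p. -/
/-- An `n₁ × n₂ × n₃` quaternion tensor has rank at most `r` if it is a sum of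
`r` simple tensors. -/
def HasRankLE {n₁ n₂ n₃ : ℕ} (r : ℕ) (T : Fin n₁ → Fin n₂ → Fin n₃ → Quaternion ℝ) : Prop :=
  ∃ (a : Fin r → Fin n₁ → Quaternion ℝ) (b : Fin r → Fin n₂ → Quaternion ℝ)
    (c : Fin r → Fin n₃ → Quaternion ℝ),
    ∀ i j k, T i j k = ∑ l : Fin r, a l i * b l j * c l k

theorem rank_le_iff_diag_factorization {m p n : ℕ}
    (T : Fin m → Fin p → Fin n → Quaternion ℝ) (r : ℕ) :
    HasRankLE r T ↔
      ∃ (P : Matrix (Fin m) (Fin r) (Quaternion ℝ)) (Q : Matrix (Fin r) (Fin n) (Quaternion ℝ))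
        (D : Fin p → Matrix (Fin r) (Fin r) (Quaternion ℝ)),
        (∀ k, (D k).IsDiag) ∧
        ∀ k : Fin p, (Matrix.of fun i l => T i k l) = P * D k * Q := by
  constructor
  · rintro ⟨a, b, c, h⟩
    refine ⟨Matrix.of fun i l => a l i, Matrix.of fun l j => c l j,
      fun k => Matrix.diagonal fun l => b l k, fun k => Matrix.isDiag_diagonal _, fun k => ?_⟩
    apply Matrix.ext; intro i j
    simp only [Matrix.of_apply, h i k j, Matrix.mul_apply, Matrix.diagonal_apply, ite_mul,
      mul_ite, mul_zero, zero_mul, Finset.sum_ite_eq', Finset.mem_univ, if_true]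
  · rintro ⟨P, Q, D, hD, h⟩
    refine ⟨fun l i => P i l, fun l k => D k l l, fun l j => Q l j, fun i k j => ?_⟩
    have := congrFun (congrFun (h k) i) j
    simp only [Matrix.of_apply] at this
    rw [this]
    simp only [Matrix.mul_apply, Finset.sum_mul]
    refine Finset.sum_congr rfl fun l _ => ?_
    rw [Finset.sum_eq_single l]
    · intro l' _ hne; rw [hD k hne]; simp
    · simp
end

section
/- Let T : Fin n → Fin p → Fin n → ℍ be an n×p×n quaternion tensor with frontal slices A₁,…,A_p, and suppose A₁ is invertible, i.e. there is B ∈ Matrix (Fin n) (Fin n) ℍ with A₁ * B = 1 and B * A₁ = 1. Then T has rank at most n (equivalently, since A₁ is nonsingular, rank exactly n) if and only if the matrices A_j * B = A_j * A₁⁻¹, for j = 2,…,p, can be simultaneously diagonalized: there exist matrices P, P' ∈ Matrix (Fin n) (Fin n) ℍ with P * P' = 1 and P' * P = 1 such that P' * (A_j * B) * P is diagonal for every j = 2,…,p. -/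
open Matrix in
/-- For square quaternion matrices, a one-sided inverse is two-sided. -/
lemma quat_mul_eq_one_comm {n : ℕ} {M N : Matrix (Fin n) (Fin n) (Quaternion ℝ)}
    (h : M * N = 1) : N * M = 1 := by
  have key : ∀ v : Fin n → Quaternion ℝ, v ᵥ* (N * M) = v := by
    have hinj : Function.Injective M.vecMulLinear := by
      intro x y hxy
      have h2 : (x ᵥ* M) ᵥ* N = (y ᵥ* M) ᵥ* N := by
        simpa [Matrix.vecMulLinear_apply] using congrArg (· ᵥ* N) hxy
      simpa [Matrix.vecMul_vecMul, h, Matrix.vecMul_one] using h2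
    have hsurj : Function.Surjective M.vecMulLinear :=
      (LinearMap.injective_iff_surjective_of_finrank_eq_finrank rfl).mp hinj
    intro v
    obtain ⟨w, hw⟩ := hsurj v
    simp only [Matrix.vecMulLinear_apply] at hw
    have hvN : v ᵥ* N = w := by
      rw [← hw, Matrix.vecMul_vecMul, h, Matrix.vecMul_one]
    rw [← Matrix.vecMul_vecMul, hvN, hw]
  refine Matrix.ext fun i j => ?_
  have := congrFun (key (Pi.single i 1)) j
  simpa [Matrix.single_one_vecMul, Matrix.one_apply, Pi.single_apply, eq_comm] using this

lemma diag_mul_isDiag {n : ℕ} (d : Fin n → Quaternion ℝ)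
    {E : Matrix (Fin n) (Fin n) (Quaternion ℝ)} (hE : E.IsDiag) :
    (Matrix.diagonal d * E).IsDiag := by
  intro i j hij
  rw [Matrix.diagonal_mul, hE hij, mul_zero]

theorem rank_eq_n_iff_simultaneously_diagonalizable {n p : ℕ} [NeZero p]
    (T : Fin n → Fin p → Fin n → Quaternion ℝ)
    (B : Matrix (Fin n) (Fin n) (Quaternion ℝ))
    (hB₁ : (Matrix.of fun i k => T i 0 k) * B = 1)
    (hB₂ : B * (Matrix.of fun i k => T i 0 k) = 1) :
    HasRankLE n T ↔
      ∃ P P' : Matrix (Fin n) (Fin n) (Quaternion ℝ),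
        P * P' = 1 ∧ P' * P = 1 ∧
        ∀ j : Fin p, j ≠ 0 → (P' * ((Matrix.of fun i k => T i j k) * B) * P).IsDiag := by
  constructor
  · rintro ⟨a, b, c, hT⟩
    set A : Matrix (Fin n) (Fin n) (Quaternion ℝ) := Matrix.of fun i l => a l i with hA_def
    set C : Matrix (Fin n) (Fin n) (Quaternion ℝ) := Matrix.of fun l k => c l k with hC_def
    set D : Fin p → Matrix (Fin n) (Fin n) (Quaternion ℝ) :=
      fun j => Matrix.diagonal (fun l => b l j) with hD_def
    have hA : ∀ j : Fin p, (Matrix.of fun i k => T i j k) = A * (D j * C) := by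
      intro j
      refine Matrix.ext fun i k => ?_
      rw [Matrix.of_apply, hT i j k, Matrix.mul_apply]
      refine Finset.sum_congr rfl fun l _ => ?_
      simp only [hD_def, Matrix.diagonal_mul, mul_assoc, hA_def, hC_def, Matrix.of_apply]
    have hB₁' : A * ((D 0 * C) * B) = 1 := by
      rw [hA 0] at hB₁
      calc A * ((D 0 * C) * B) = (A * (D 0 * C)) * B := by rw [← Matrix.mul_assoc]
        _ = 1 := hB₁
    have hP'A : ((D 0 * C) * B) * A = 1 := quat_mul_eq_one_comm hB₁'
    set E : Matrix (Fin n) (Fin n) (Quaternion ℝ) := C * (B * A) with hE_def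
    have hB₂' : E * D 0 = 1 := by
      have h1 : (B * (A * D 0)) * C = 1 := by
        rw [hA 0] at hB₂
        calc (B * (A * D 0)) * C = B * (A * (D 0 * C)) := by
              simp only [Matrix.mul_assoc]
          _ = 1 := hB₂
      have h2 : C * (B * (A * D 0)) = 1 := quat_mul_eq_one_comm h1
      calc E * D 0 = C * (B * (A * D 0)) := by
            simp only [hE_def, Matrix.mul_assoc]
        _ = 1 := h2
    have hB₂'' : D 0 * E = 1 := quat_mul_eq_one_comm hB₂'
    have hd_ne : ∀ l : Fin n, b l 0 ≠ 0 := by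
      intro l hl
      have h := congrFun (congrFun hB₂'' l) l
      simp only [hD_def, Matrix.diagonal_mul, hl, zero_mul, Matrix.one_apply_eq] at h
      exact zero_ne_one h
    have hE_diag : E.IsDiag := by
      intro i j hij
      have h := congrFun (congrFun hB₂' i) j
      simp only [hD_def, Matrix.mul_diagonal, Matrix.one_apply_ne hij] at h
      rcases mul_eq_zero.mp h with h' | h'
      · exact h'
      · exact absurd h' (hd_ne j)
    refine ⟨A, (D 0 * C) * B, hB₁', hP'A, ?_⟩
    intro j _
    have hkey : ((D 0 * C) * B) * ((Matrix.of fun i k => T i j k) * B) * A = D j * E := by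
      rw [hA j]
      calc ((D 0 * C) * B) * ((A * (D j * C)) * B) * A
          = (((D 0 * C) * B) * A) * (D j * (C * (B * A))) := by
            simp only [Matrix.mul_assoc]
        _ = D j * E := by rw [hP'A, one_mul, hE_def]
    rw [hkey, hD_def]
    exact diag_mul_isDiag _ hE_diag
  · rintro ⟨P, P', hPP', hP'P, hdiag⟩
    set A₀ : Matrix (Fin n) (Fin n) (Quaternion ℝ) := Matrix.of fun i k => T i 0 k with hA₀
    set M : Fin p → Matrix (Fin n) (Fin n) (Quaternion ℝ) :=
      fun j => P' * ((Matrix.of fun i k => T i j k) * B) * P with hM_def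
    have hMdiag : ∀ j : Fin p, (M j).IsDiag := by
      intro j
      rcases eq_or_ne j 0 with rfl | hj
      · have h : M 0 = 1 := by
          simp only [hM_def]
          rw [← hA₀, hB₁, Matrix.mul_one, hP'P]
        rw [h]; exact Matrix.isDiag_one
      · exact hdiag j hj
    refine ⟨fun l i => P i l, fun l j => M j l l, fun l k => (P' * A₀) l k, ?_⟩
    intro i j k
    have hrec : (Matrix.of fun i k => T i j k) = P * (M j * (P' * A₀)) := by
      calc (Matrix.of fun i k => T i j k)
          = ((Matrix.of fun i k => T i j k) * B) * A₀ := by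
            rw [Matrix.mul_assoc, hB₂, Matrix.mul_one]
        _ = (P * P') * (((Matrix.of fun i k => T i j k) * B) * ((P * P') * A₀)) := by
            rw [hPP']; simp
        _ = P * (M j * (P' * A₀)) := by
            simp only [hM_def, Matrix.mul_assoc]
    have hdiagM : M j = Matrix.diagonal (fun l => M j l l) := by
      refine Matrix.ext fun x y => ?_
      rcases eq_or_ne x y with rfl | hxy
      · rw [Matrix.diagonal_apply_eq]
      · rw [Matrix.diagonal_apply_ne _ hxy, hMdiag j hxy]
    have h := congrFun (congrFun hrec i) k
    rw [Matrix.of_apply] at h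
    rw [h]
    conv_lhs => rw [hdiagM]
    rw [Matrix.mul_apply]
    refine Finset.sum_congr rfl fun l _ => ?_
    simp only [Matrix.diagonal_mul, Matrix.diagonal_apply_eq, mul_assoc]
end

section
/- Let T be a 2×2×2 quaternion tensor whose two frontal slices are A = [[A₁₁, A₁₂],[A₂₁, A₂₂]] and B = [[B₁₁, B₁₂],[B₂₁, B₂₂]] with entries in ℍ, and suppose A₁₁ ≠ 0 and B₁₁ ≠ 0. Then T = T₁ + T₂ + T₃, where T₁ is the tensor with frontal slices ([[A₁₁, A₁₁*(A₁₁⁻¹*A₁₂)],[A₂₁, A₂₁*(A₁₁⁻¹*A₁₂)]], 0), T₂ is the tensor with frontal slices (0, [[B₁₁, B₁₁*(B₁₁⁻¹*B₁₂)],[B₂₁, B₂₁*(B₁₁⁻¹*B₁₂)]]), and T₃ is the tensor with frontal slices ([[0,0],[0, A₂₂ - A₂₁*(A₁₁⁻¹*A₁₂)]], [[0,0],[0, B₂₂ - B₂₁*(B₁₁⁻¹*B₁₂)]]); moreover each of T₁, T₂, T₃ has rank at most 1. -/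
/-- The first summand `T₁` of the decomposition, supported on the first frontal slice
(`j = 0`); `T i j k` with `j = 0` gives the slice `A`, so e.g. `A₁₁ = T 0 0 0`. -/
noncomputable def T₁ (T : Fin 2 → Fin 2 → Fin 2 → Quaternion ℝ) : Fin 2 → Fin 2 → Fin 2 → Quaternion ℝ :=
  fun i j k =>
    if j = 0 then
      !![T 0 0 0, T 0 0 0 * ((T 0 0 0)⁻¹ * T 0 0 1);
         T 1 0 0, T 1 0 0 * ((T 0 0 0)⁻¹ * T 0 0 1)] i k
    else 0

/-- The second summand `T₂`, supported on the second frontal slice (`j = 1`), which is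
the slice `B`, so e.g. `B₁₁ = T 0 1 0`. -/
noncomputable def T₂ (T : Fin 2 → Fin 2 → Fin 2 → Quaternion ℝ) : Fin 2 → Fin 2 → Fin 2 → Quaternion ℝ :=
  fun i j k =>
    if j = 1 then
      !![T 0 1 0, T 0 1 0 * ((T 0 1 0)⁻¹ * T 0 1 1);
         T 1 1 0, T 1 1 0 * ((T 0 1 0)⁻¹ * T 0 1 1)] i k
    else 0

/-- The third summand `T₃`, supported on the bottom-right entry of each frontal slice. -/
noncomputable def T₃ (T : Fin 2 → Fin 2 → Fin 2 → Quaternion ℝ) : Fin 2 → Fin 2 → Fin 2 → Quaternion ℝ :=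
  fun i j k =>
    if i = 1 ∧ k = 1 then
      (if j = 0 then T 1 0 1 - T 1 0 0 * ((T 0 0 0)⁻¹ * T 0 0 1)
       else T 1 1 1 - T 1 1 0 * ((T 0 1 0)⁻¹ * T 0 1 1))
    else 0

theorem decomposition_222 (T : Fin 2 → Fin 2 → Fin 2 → Quaternion ℝ)
    (hA : T 0 0 0 ≠ 0) (hB : T 0 1 0 ≠ 0) :
    (∀ i j k, T i j k = T₁ T i j k + T₂ T i j k + T₃ T i j k) ∧
    HasRankLE 1 (T₁ T) ∧ HasRankLE 1 (T₂ T) ∧ HasRankLE 1 (T₃ T) := by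
  refine ⟨?_, ?_, ?_, ?_⟩
  · intro i j k
    fin_cases i <;> fin_cases j <;> fin_cases k <;>
      simp [T₁, T₂, T₃, Matrix.cons_val_zero, Matrix.cons_val_one,
        mul_inv_cancel_left₀ hA, mul_inv_cancel_left₀ hB]
  · refine ⟨fun _ i => !![T 0 0 0; T 1 0 0] i 0,
      fun _ j => if j = 0 then 1 else 0,
      fun _ k => !![1, (T 0 0 0)⁻¹ * T 0 0 1] 0 k, ?_⟩
    intro i j k
    fin_cases i <;> fin_cases j <;> fin_cases k <;> simp [T₁]
  · refine ⟨fun _ i => !![T 0 1 0; T 1 1 0] i 0,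
      fun _ j => if j = 1 then 1 else 0,
      fun _ k => !![1, (T 0 1 0)⁻¹ * T 0 1 1] 0 k, ?_⟩
    intro i j k
    fin_cases i <;> fin_cases j <;> fin_cases k <;> simp [T₂]
  · refine ⟨fun _ i => if i = 1 then 1 else 0,
      fun _ j => if j = 0 then T 1 0 1 - T 1 0 0 * ((T 0 0 0)⁻¹ * T 0 0 1)
        else T 1 1 1 - T 1 1 0 * ((T 0 1 0)⁻¹ * T 0 1 1),
      fun _ k => if k = 1 then 1 else 0, ?_⟩
    intro i j k
    fin_cases i <;> fin_cases j <;> fin_cases k <;> simp [T₃]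
end

section
/- Every 2×2×2 quaternion tensor T : Fin 2 → Fin 2 → Fin 2 → ℍ has rank at most 3, i.e. T can be written as a sum of 3 simple tensors. -/
/-- If the `k = 0` slice is a rank-one matrix, the tensor has rank at most 3. -/
lemma rankLE_of_slice0_rank1 (T : Fin 2 → Fin 2 → Fin 2 → Quaternion ℝ)
    (u v : Fin 2 → Quaternion ℝ) (h : ∀ i j, T i j 0 = u i * v j) :
    HasRankLE 3 T := by
  refine ⟨![u, ![1, 0], ![0, 1]],
    ![v, ![T 0 0 1, T 0 1 1], ![T 1 0 1, T 1 1 1]],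
    ![![1, 0], ![0, 1], ![0, 1]], ?_⟩
  intro i j k
  fin_cases i <;> fin_cases j <;> fin_cases k <;>
    simp [Fin.sum_univ_three, Matrix.vecHead, Matrix.vecTail, h 0 0, h 0 1, h 1 0, h 1 1]

/-- If the `k = 1` slice is a right multiple of the `k = 0` slice, the tensor has
rank at most 3. -/
lemma rankLE_of_solved (T : Fin 2 → Fin 2 → Fin 2 → Quaternion ℝ)
    (p q r s : Quaternion ℝ)
    (h00 : T 0 0 1 = T 0 0 0 * p + T 0 1 0 * r)
    (h01 : T 0 1 1 = T 0 0 0 * q + T 0 1 0 * s)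
    (h10 : T 1 0 1 = T 1 0 0 * p + T 1 1 0 * r)
    (h11 : T 1 1 1 = T 1 0 0 * q + T 1 1 0 * s) :
    HasRankLE 3 T := by
  refine ⟨![![T 0 0 0, T 1 0 0], ![T 0 1 0, T 1 1 0],
      ![T 0 0 0 + T 0 1 0 * r, T 1 0 0 + T 1 1 0 * r]],
    ![![1, 0], ![0, 1], ![1, q]],
    ![![1, p - 1], ![1, s - r * q], ![0, 1]], ?_⟩
  intro i j k
  fin_cases i <;> fin_cases j <;> fin_cases k <;>
    simp [Fin.sum_univ_three, Matrix.vecHead, Matrix.vecTail, h00, h01, h10, h11] <;> noncomm_ring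

/-- Solving a 2×2 linear system over the quaternions, generic case. -/
lemma solve2 (a b c d B0 B1 : Quaternion ℝ) (ha : a ≠ 0)
    (he : d - c * a⁻¹ * b ≠ 0) :
    ∃ p r, B0 = a * p + b * r ∧ B1 = c * p + d * r := by
  set e := d - c * a⁻¹ * b with hedef
  refine ⟨a⁻¹ * (B0 - b * (e⁻¹ * (B1 - c * a⁻¹ * B0))),
    e⁻¹ * (B1 - c * a⁻¹ * B0), ?_, ?_⟩
  · rw [← mul_assoc, mul_inv_cancel₀ ha, one_mul]
    abel
  · have h1 : c * (a⁻¹ * (B0 - b * (e⁻¹ * (B1 - c * a⁻¹ * B0))))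
        = c * a⁻¹ * B0 - c * a⁻¹ * b * (e⁻¹ * (B1 - c * a⁻¹ * B0)) := by
      noncomm_ring
    rw [h1]
    have h2 : c * a⁻¹ * B0 - c * a⁻¹ * b * (e⁻¹ * (B1 - c * a⁻¹ * B0))
        + d * (e⁻¹ * (B1 - c * a⁻¹ * B0))
        = c * a⁻¹ * B0 + e * (e⁻¹ * (B1 - c * a⁻¹ * B0)) := by
      rw [hedef]; noncomm_ring
    rw [h2, ← mul_assoc, mul_inv_cancel₀ he, one_mul]
    abel

/-- Solving a 2×2 linear system over the quaternions, case `a = 0`. -/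
lemma solve2' (a b c d B0 B1 : Quaternion ℝ) (ha : a = 0) (hb : b ≠ 0)
    (hc : c ≠ 0) :
    ∃ p r, B0 = a * p + b * r ∧ B1 = c * p + d * r := by
  refine ⟨c⁻¹ * (B1 - d * (b⁻¹ * B0)), b⁻¹ * B0, ?_, ?_⟩
  · rw [ha, zero_mul, zero_add, ← mul_assoc, mul_inv_cancel₀ hb, one_mul]
  · rw [← mul_assoc c c⁻¹, mul_inv_cancel₀ hc, one_mul]
    abel

theorem rank_le_three_222 (T : Fin 2 → Fin 2 → Fin 2 → Quaternion ℝ) :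
    HasRankLE 3 T := by
  set a := T 0 0 0 with hadef
  set b := T 0 1 0 with hbdef
  set c := T 1 0 0 with hcdef
  set d := T 1 1 0 with hddef
  by_cases ha : a = 0
  · by_cases hb : b = 0
    · -- first row of slice 0 is zero
      refine rankLE_of_slice0_rank1 T ![0, 1] ![c, d] ?_
      intro i j
      fin_cases i <;> fin_cases j <;>
        simp [← hadef, ← hbdef, ← hcdef, ← hddef, ha, hb]
    · by_cases hc : c = 0
      · -- first column of slice 0 is zero
        refine rankLE_of_slice0_rank1 T ![1, d * b⁻¹] ![0, b] ?_
        intro i j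
        fin_cases i <;> fin_cases j <;>
          simp [← hadef, ← hbdef, ← hcdef, ← hddef, ha, hc,
            mul_assoc, inv_mul_cancel₀ hb]
      · -- a = 0, b ≠ 0, c ≠ 0 : solvable system
        obtain ⟨p, r, hp, hr⟩ := solve2' a b c d (T 0 0 1) (T 1 0 1) ha hb hc
        obtain ⟨q, s, hq, hs⟩ := solve2' a b c d (T 0 1 1) (T 1 1 1) ha hb hc
        exact rankLE_of_solved T p q r s hp hq hr hs
  · by_cases he : d - c * a⁻¹ * b = 0
    · -- rows of slice 0 are left-dependent
      refine rankLE_of_slice0_rank1 T ![1, c * a⁻¹] ![a, b] ?_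
      have hd : d = c * a⁻¹ * b := by linear_combination (norm := noncomm_ring) he
      intro i j
      fin_cases i <;> fin_cases j <;>
        simp [← hadef, ← hbdef, ← hcdef, ← hddef, hd,
          mul_assoc, inv_mul_cancel₀ ha]
    · obtain ⟨p, r, hp, hr⟩ := solve2 a b c d (T 0 0 1) (T 1 0 1) ha he
      obtain ⟨q, s, hq, hs⟩ := solve2 a b c d (T 0 1 1) (T 1 1 1) ha he
      exact rankLE_of_solved T p q r s hp hq hr hs
end

section
/- The 2×2×2 quaternion tensor T whose two frontal slices are the identity matrix [[1,0],[0,1]] and the matrix [[0,1],[0,0]] does not have rank at most 2; that is, T cannot be written as a sum of 2 simple tensors over ℍ (hence, combined with the bound rank ≤ 3 for all 2×2×2 quaternion tensors, T has rank exactly 3). -/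
open Matrix

lemma mul_eq_zero_of_mul_eq_mul_of_mul_eq_zero {M₀ : Type*} [MulZeroClass M₀] [NoZeroDivisors M₀]
    {x y α β : M₀} (hx : x * β = y * α) (hy : y * β = 0) : y * α = 0 := by
  rcases mul_eq_zero.mp hy with rfl | rfl
  · exact zero_mul α
  · rw [← hx, mul_zero]

theorem mul_diagonal_mul_ne_of_mul_diagonal_mul_eq_one {K : Type*} [Ring K] [IsDomain K]
    [IsStablyFiniteRing K] {A C : Matrix (Fin 2) (Fin 2) K} {α : Fin 2 → K}
    (hα : A * diagonal α * C = 1) (β : Fin 2 → K) :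
    A * diagonal β * C ≠ !![0, 1; 0, 0] := by
  intro hβ
  have hCA : C * (A * diagonal α) = 1 := mul_eq_one_comm.mp hα
  have hN : A * diagonal β = !![0, 1; 0, 0] * A * diagonal α := by
    rw [← hβ, Matrix.mul_assoc _ A, Matrix.mul_assoc _ C, hCA, Matrix.mul_one]
  have hrow : ∀ l, A 1 l * α l = 0 := fun l ↦ by
    have h₀ := congrFun (congrFun hN 0) l
    have h₁ := congrFun (congrFun hN 1) l
    simp only [mul_diagonal] at h₀ h₁
    simp only [mul_apply, Fin.sum_univ_two, of_apply, cons_val', cons_val_zero, cons_val_one,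
      empty_val', cons_val_fin_one, zero_mul, one_mul, zero_add] at h₀ h₁
    exact mul_eq_zero_of_mul_eq_mul_of_mul_eq_zero h₀ h₁
  have h₁₁ := congrFun (congrFun hα 1) 1
  simp [mul_apply, hrow] at h₁₁

lemma HasRankLE.exists_mul_diagonal_mul {n₁ n₂ n₃ r : ℕ}
    {T : Fin n₁ → Fin n₂ → Fin n₃ → Quaternion ℝ} (hT : HasRankLE r T) :
    ∃ (A : Matrix (Fin n₁) (Fin r) (Quaternion ℝ)) (d : Fin n₂ → Fin r → Quaternion ℝ)
      (C : Matrix (Fin r) (Fin n₃) (Quaternion ℝ)),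
      ∀ j, A * diagonal (d j) * C = of fun i k ↦ T i j k := by
  obtain ⟨a, b, c, h⟩ := hT
  refine ⟨(of a)ᵀ, fun j l ↦ b l j, of c, fun j ↦ ?_⟩
  ext i k : 1
  simp [mul_apply, diagonal_apply, h]

theorem not_rank_le_two_222 (T : Fin 2 → Fin 2 → Fin 2 → Quaternion ℝ)
    (hT : ∀ i j k, T i j k =
      if j = 0 then (1 : Matrix (Fin 2) (Fin 2) (Quaternion ℝ)) i k
      else !![(0 : Quaternion ℝ), 1; 0, 0] i k) :
    ¬ HasRankLE 2 T := by
  intro hrank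
  obtain ⟨A, d, C, hslice⟩ := hrank.exists_mul_diagonal_mul
  have h₀ : A * diagonal (d 0) * C = 1 := by
    rw [hslice]; ext i k : 1; simp [hT]
  have h₁ : A * diagonal (d 1) * C = !![0, 1; 0, 0] := by
    rw [hslice]; ext i k : 1; simp [hT]
  exact mul_diagonal_mul_ne_of_mul_diagonal_mul_eq_one h₀ (d 1) h₁
end

section
/- Every 2×2×3 quaternion tensor T : Fin 2 → Fin 2 → Fin 3 → ℍ has rank at most 3, i.e. T can be written as a sum of 3 simple tensors. -/
private lemma flip_i {n₃ r : ℕ} (T : Fin 2 → Fin 2 → Fin n₃ → Quaternion ℝ)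
    (h : HasRankLE r (fun i j k => T (![1,0] i) j k)) : HasRankLE r T := by
  obtain ⟨a, b, c, h⟩ := h
  refine ⟨fun l i => a l (![1,0] i), b, c, fun i j k => ?_⟩
  have hi : ∀ i : Fin 2, ![(1 : Fin 2), 0] (![1,0] i) = i := by decide
  simpa [hi] using h (![1,0] i) j k

private lemma flip_j {n₃ r : ℕ} (T : Fin 2 → Fin 2 → Fin n₃ → Quaternion ℝ)
    (h : HasRankLE r (fun i j k => T i (![1,0] j) k)) : HasRankLE r T := by
  obtain ⟨a, b, c, h⟩ := h
  refine ⟨a, fun l j => b l (![1,0] j), c, fun i j k => ?_⟩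
  have hj : ∀ j : Fin 2, ![(1 : Fin 2), 0] (![1,0] j) = j := by decide
  simpa [hj] using h i (![1,0] j) k

private lemma core (T : Fin 2 → Fin 2 → Fin 3 → Quaternion ℝ) (h1 h2 h3 : Quaternion ℝ)
    (hT : ∀ k, T 1 1 k = h1 * T 0 0 k + h2 * T 0 1 k + h3 * T 1 0 k) :
    HasRankLE 3 T := by
  refine ⟨![![1, h2 + 1], ![1, h2], ![0, 1]],
          ![![1, h1 + h3 * (h2 + 1)], ![0, 1], ![1, h3]],
          ![fun k => T 0 0 k,
            fun k => T 0 1 k - (h1 + h3 * (h2 + 1)) * T 0 0 k,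
            fun k => T 1 0 k - (h2 + 1) * T 0 0 k], ?_⟩
  intro i j k
  fin_cases i <;> fin_cases j <;>
    simp only [Fin.sum_univ_three, Matrix.cons_val_zero, Matrix.cons_val_one, Matrix.head_cons,
      Fin.isValue, Matrix.cons_val_two, Matrix.tail_cons, Fin.mk_one, Fin.zero_eta] <;>
    [skip; skip; skip; rw [hT k]] <;> noncomm_ring

private lemma solve (q a0 a1 a2 x0 x1 x2 y : Quaternion ℝ) (hq : q ≠ 0)
    (h : a0 * x0 + a1 * x1 + a2 * x2 + q * y = 0) :
    y = (-(q⁻¹ * a0)) * x0 + (-(q⁻¹ * a1)) * x1 + (-(q⁻¹ * a2)) * x2 := by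
  have h2 : q * y = -(a0 * x0 + a1 * x1 + a2 * x2) := by
    have := neg_eq_of_add_eq_zero_right h
    rw [← this]
  calc y = q⁻¹ * (q * y) := by rw [← mul_assoc, inv_mul_cancel₀ hq, one_mul]
    _ = q⁻¹ * (-(a0 * x0 + a1 * x1 + a2 * x2)) := by rw [h2]
    _ = _ := by noncomm_ring

theorem rank_le_three_223 (T : Fin 2 → Fin 2 → Fin 3 → Quaternion ℝ) :
    HasRankLE 3 T := by
  set v : Fin 4 → Fin 3 → Quaternion ℝ :=
    ![fun k => T 0 0 k, fun k => T 0 1 k, fun k => T 1 0 k, fun k => T 1 1 k] with hv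
  have hdep : ¬ LinearIndependent (Quaternion ℝ) v := by
    intro h
    have := h.fintype_card_le_finrank
    rw [Module.finrank_pi] at this
    simp at this
  obtain ⟨g, hsum, l, hl⟩ := Fintype.not_linearIndependent_iff.mp hdep
  have hk : ∀ k, g 0 * T 0 0 k + g 1 * T 0 1 k + g 2 * T 1 0 k + g 3 * T 1 1 k = 0 := by
    intro k
    have := congrFun hsum k
    simpa [hv, Fin.sum_univ_four] using this
  fin_cases l
  · -- g 0 ≠ 0 : express T 0 0, flip both
    refine flip_i T (flip_j _ (core _ (-(g 0)⁻¹ * g 3) (-(g 0)⁻¹ * g 2) (-(g 0)⁻¹ * g 1) ?_))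
    intro k
    simp only [Matrix.cons_val_zero, Matrix.cons_val_one, Matrix.head_cons]
    have := solve (g 0) (g 3) (g 2) (g 1) (T 1 1 k) (T 1 0 k) (T 0 1 k) (T 0 0 k) hl
      (by rw [← hk k]; abel)
    rw [this]; noncomm_ring
  · -- g 1 ≠ 0 : express T 0 1, flip i
    refine flip_i T (core _ (-(g 1)⁻¹ * g 2) (-(g 1)⁻¹ * g 3) (-(g 1)⁻¹ * g 0) ?_)
    intro k
    simp only [Matrix.cons_val_zero, Matrix.cons_val_one, Matrix.head_cons]
    have := solve (g 1) (g 2) (g 3) (g 0) (T 1 0 k) (T 1 1 k) (T 0 0 k) (T 0 1 k) hl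
      (by rw [← hk k]; abel)
    rw [this]; noncomm_ring
  · -- g 2 ≠ 0 : express T 1 0, flip j
    refine flip_j T (core _ (-(g 2)⁻¹ * g 1) (-(g 2)⁻¹ * g 0) (-(g 2)⁻¹ * g 3) ?_)
    intro k
    simp only [Matrix.cons_val_zero, Matrix.cons_val_one, Matrix.head_cons]
    have := solve (g 2) (g 1) (g 0) (g 3) (T 0 1 k) (T 0 0 k) (T 1 1 k) (T 1 0 k) hl
      (by rw [← hk k]; abel)
    rw [this]; noncomm_ring
  · -- g 3 ≠ 0 : express T 1 1
    refine core _ (-(g 3)⁻¹ * g 0) (-(g 3)⁻¹ * g 1) (-(g 3)⁻¹ * g 2) ?_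
    intro k
    have := solve (g 3) (g 0) (g 1) (g 2) (T 0 0 k) (T 0 1 k) (T 1 0 k) (T 1 1 k) hl (hk k)
    rw [this]; noncomm_ring
end

section
/- Every 3×2×2 quaternion tensor T : Fin 3 → Fin 2 → Fin 2 → ℍ has rank at most 3, i.e. T can be written as a sum of 3 simple tensors. -/
private lemma unswapJ {r : ℕ} (T : Fin 3 → Fin 2 → Fin 2 → Quaternion ℝ)
    (h : HasRankLE r (fun i j k => T i (Equiv.swap 0 1 j) k)) : HasRankLE r T := by
  obtain ⟨a, b, c, hh⟩ := h
  refine ⟨a, fun l j => b l (Equiv.swap 0 1 j), c, fun i j k => ?_⟩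
  have := hh i (Equiv.swap 0 1 j) k
  simpa [Equiv.swap_apply_self] using this

private lemma unswapK {r : ℕ} (T : Fin 3 → Fin 2 → Fin 2 → Quaternion ℝ)
    (h : HasRankLE r (fun i j k => T i j (Equiv.swap 0 1 k))) : HasRankLE r T := by
  obtain ⟨a, b, c, hh⟩ := h
  refine ⟨a, b, fun l k => c l (Equiv.swap 0 1 k), fun i j k => ?_⟩
  have := hh i j (Equiv.swap 0 1 k)
  simpa [Equiv.swap_apply_self] using this

private lemma core_s9 (T : Fin 3 → Fin 2 → Fin 2 → Quaternion ℝ) (x : Fin 2 → Fin 2 → Quaternion ℝ)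
    (hx : x 1 1 ≠ 0)
    (h : ∀ i, T i 0 0 * x 0 0 + T i 0 1 * x 0 1 + T i 1 0 * x 1 0 + T i 1 1 * x 1 1 = 0) :
    HasRankLE 3 T := by
  set α : Quaternion ℝ := -(x 0 0 * (x 1 1)⁻¹) with hα
  set β : Quaternion ℝ := -(x 0 1 * (x 1 1)⁻¹) with hβ
  set γ : Quaternion ℝ := -(x 1 0 * (x 1 1)⁻¹) with hγ
  set s : Quaternion ℝ := γ + 1 with hs
  set u : Quaternion ℝ := α + γ * β + β with hu
  have ht : ∀ i, T i 1 1 = T i 0 0 * (u * s - s * β - u * γ) + T i 0 1 * β + T i 1 0 * γ := by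
    intro i
    have e1 : T i 1 1 * x 1 1 = -(T i 0 0 * x 0 0 + T i 0 1 * x 0 1 + T i 1 0 * x 1 0) :=
      eq_neg_of_add_eq_zero_right (h i)
    calc T i 1 1 = T i 1 1 * x 1 1 * (x 1 1)⁻¹ := by
            rw [mul_assoc, mul_inv_cancel₀ hx, mul_one]
      _ = -(T i 0 0 * x 0 0 + T i 0 1 * x 0 1 + T i 1 0 * x 1 0) * (x 1 1)⁻¹ := by rw [e1]
      _ = T i 0 0 * (u * s - s * β - u * γ) + T i 0 1 * β + T i 1 0 * γ := by
            rw [hu, hs, hα, hβ, hγ]; noncomm_ring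
  refine ⟨![fun i => T i 0 0, fun i => T i 0 1 - T i 0 0 * s, fun i => T i 1 0 - T i 0 0 * u],
          ![![1, u], ![1, β], ![0, 1]],
          ![![1, s], ![0, 1], ![1, γ]], ?_⟩
  intro i j k
  fin_cases j <;> fin_cases k <;> simp [Fin.sum_univ_three]
  rw [ht i]; noncomm_ring

private lemma exists_x (T : Fin 3 → Fin 2 → Fin 2 → Quaternion ℝ) :
    ∃ x : Fin 2 → Fin 2 → Quaternion ℝ, x ≠ 0 ∧
      ∀ i, T i 0 0 * x 0 0 + T i 0 1 * x 0 1 + T i 1 0 * x 1 0 + T i 1 1 * x 1 1 = 0 := by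
  let g : (Fin 4 → Quaternion ℝ) →ₗ[Quaternion ℝ] (Fin 3 → Quaternion ℝ) :=
    { toFun := fun y i => y 0 * star (T i 0 0) + y 1 * star (T i 0 1) + y 2 * star (T i 1 0)
        + y 3 * star (T i 1 1)
      map_add' := by
        intro y z; funext i
        simp only [Pi.add_apply, add_mul]
        abel
      map_smul' := by
        intro t y; funext i
        simp only [Pi.smul_apply, smul_eq_mul, RingHom.id_apply, mul_add, mul_assoc] }
  have hker : LinearMap.ker g ≠ ⊥ := by
    intro hk
    have hinj : Function.Injective g := LinearMap.ker_eq_bot.mp hk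
    have h4 := LinearMap.finrank_le_finrank_of_injective hinj
    simp [Module.finrank_pi] at h4
  obtain ⟨y, hy, hy0⟩ := (Submodule.ne_bot_iff _).mp hker
  refine ⟨![![star (y 0), star (y 1)], ![star (y 2), star (y 3)]], ?_, ?_⟩
  · intro h0
    apply hy0
    funext m
    fin_cases m
    · have := congrFun (congrFun h0 0) 0
      simpa using congrArg star this
    · have := congrFun (congrFun h0 0) 1
      simpa using congrArg star this
    · have := congrFun (congrFun h0 1) 0
      simpa using congrArg star this
    · have := congrFun (congrFun h0 1) 1
      simpa using congrArg star this
  · intro i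
    have e : y 0 * star (T i 0 0) + y 1 * star (T i 0 1) + y 2 * star (T i 1 0)
        + y 3 * star (T i 1 1) = 0 := congrFun (LinearMap.mem_ker.mp hy) i
    have e2 := congrArg star e
    simp only [star_add, star_mul, star_star, star_zero] at e2
    simpa using e2

theorem rank_le_three_322 (T : Fin 3 → Fin 2 → Fin 2 → Quaternion ℝ) :
    HasRankLE 3 T := by
  obtain ⟨x, hx0, hrel⟩ := exists_x T
  by_cases h11 : x 1 1 ≠ 0
  · exact core_s9 T x h11 hrel
  push_neg at h11
  by_cases h10 : x 1 0 ≠ 0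
  · apply unswapK
    refine core_s9 _ (fun j k => x j (Equiv.swap 0 1 k)) (by simpa using h10) ?_
    intro i
    simp only [Equiv.swap_apply_left, Equiv.swap_apply_right]
    calc T i 0 1 * x 0 1 + T i 0 0 * x 0 0 + T i 1 1 * x 1 1 + T i 1 0 * x 1 0
        = T i 0 0 * x 0 0 + T i 0 1 * x 0 1 + T i 1 0 * x 1 0 + T i 1 1 * x 1 1 := by abel
      _ = 0 := hrel i
  push_neg at h10
  by_cases h01 : x 0 1 ≠ 0
  · apply unswapJ
    refine core_s9 _ (fun j k => x (Equiv.swap 0 1 j) k) (by simpa using h01) ?_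
    intro i
    simp only [Equiv.swap_apply_left, Equiv.swap_apply_right]
    calc T i 1 0 * x 1 0 + T i 1 1 * x 1 1 + T i 0 0 * x 0 0 + T i 0 1 * x 0 1
        = T i 0 0 * x 0 0 + T i 0 1 * x 0 1 + T i 1 0 * x 1 0 + T i 1 1 * x 1 1 := by abel
      _ = 0 := hrel i
  push_neg at h01
  have h00 : x 0 0 ≠ 0 := by
    intro h00
    apply hx0
    funext j k
    fin_cases j <;> fin_cases k <;> simp_all
  apply unswapJ
  apply unswapK
  refine core_s9 _ (fun j k => x (Equiv.swap 0 1 j) (Equiv.swap 0 1 k)) (by simpa using h00) ?_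
  intro i
  simp only [Equiv.swap_apply_left, Equiv.swap_apply_right]
  calc T i 1 1 * x 1 1 + T i 1 0 * x 1 0 + T i 0 1 * x 0 1 + T i 0 0 * x 0 0
      = T i 0 0 * x 0 0 + T i 0 1 * x 0 1 + T i 1 0 * x 1 0 + T i 1 1 * x 1 1 := by abel
    _ = 0 := hrel i
end

section
/- Every 2×3×3 quaternion tensor T : Fin 2 → Fin 3 → Fin 3 → ℍ has rank at most 4, i.e. T can be written as a sum of 4 simple tensors. -/
open Matrix
open scoped Quaternion RightActions

local notation "𝕄" => Matrix (Fin 3) (Fin 3) ℍ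

namespace HasRankLE

variable {r n₁ n₂ n₃ : ℕ}

theorem comp {T : Fin n₁ → Fin n₂ → Fin n₃ → ℍ} (h : HasRankLE r T) {m₁ m₂ m₃ : ℕ}
    (e₁ : Fin m₁ → Fin n₁) (e₂ : Fin m₂ → Fin n₂) (e₃ : Fin m₃ → Fin n₃) :
    HasRankLE r fun i j k => T (e₁ i) (e₂ j) (e₃ k) := by
  obtain ⟨a, b, c, h⟩ := h
  exact ⟨fun l => a l ∘ e₁, fun l => b l ∘ e₂, fun l => c l ∘ e₃, fun i j k => h _ _ _⟩

theorem swap {T : Fin 2 → Fin n₂ → Fin n₃ → ℍ} (h : HasRankLE r T) :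
    HasRankLE r ![T 1, T 0] := by
  have key : ![T 1, T 0] = fun i j k => T (![1, 0] i) (id j) (id k) := by
    funext i
    fin_cases i <;> rfl
  rw [key]
  exact h.comp _ _ _

theorem mul_right {T : Fin n₁ → Matrix (Fin n₂) (Fin n₃) ℍ} (h : HasRankLE r T) {m : ℕ}
    (A : Matrix (Fin n₃) (Fin m) ℍ) : HasRankLE r fun i => T i * A := by
  obtain ⟨a, b, c, h⟩ := h
  refine ⟨a, b, fun l => c l ᵥ* A, fun i j k => ?_⟩
  simp only [mul_apply, h, vecMul, dotProduct, Finset.sum_mul, Finset.mul_sum, mul_assoc]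
  exact Finset.sum_comm

end HasRankLE

theorem hasRankLE_of_slices {n₂ n₃ r s : ℕ} {A B : Matrix (Fin n₂) (Fin n₃) ℍ}
    {u : Fin r → Fin n₂ → ℍ} {w : Fin r → Fin n₃ → ℍ}
    {u' : Fin s → Fin n₂ → ℍ} {w' : Fin s → Fin n₃ → ℍ}
    (hA : ∀ j k, A j k = ∑ i, u i j * w i k) (hB : ∀ j k, B j k = ∑ i, u' i j * w' i k) :
    HasRankLE (r + s) (![A, B] : Fin 2 → Matrix (Fin n₂) (Fin n₃) ℍ) := by
  refine ⟨Fin.append (fun _ => ![1, 0]) (fun _ => ![0, 1]), Fin.append u u', Fin.append w w',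
    Fin.forall_fin_two.mpr ⟨fun j k => ?_, fun j k => ?_⟩⟩ <;>
  simp [Fin.sum_univ_add, hA, hB]

theorem Matrix.isUnit_of_mulVec_eq_zero {D : Type*} [DivisionRing D] {n : Type*} [Fintype n]
    [DecidableEq n] {A : Matrix n n D} (h : ∀ v, A *ᵥ v = 0 → v = 0) : IsUnit A :=
  IsArtinianRing.isUnit_iff_isLeftRegular.mpr <| isLeftRegular_iff_mulVec_injective.mpr
    fun v w hvw => sub_eq_zero.mp <| h _ <| by rw [mulVec_sub, hvw, sub_self]

theorem Matrix.exists_sum_of_mulVec_eq_zero {D : Type*} [DivisionRing D] {m n : ℕ}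
    (A : Matrix (Fin m) (Fin (n + 1)) D) {s : Fin (n + 1) → D} (hs : s ≠ 0) (hA : A *ᵥ s = 0) :
    ∃ (u : Fin n → Fin m → D) (w : Fin n → Fin (n + 1) → D),
      ∀ j k, A j k = ∑ i, u i j * w i k := by
  obtain ⟨l, hl⟩ := Function.ne_iff.mp hs
  set t := s <• (s l)⁻¹
  have ht : A *ᵥ t = 0 := by rw [mulVec_smul, hA, smul_zero]
  have htl : t l = 1 := by simp [t, mul_inv_cancel₀ hl]
  -- `A = A * N`, and the row `l` of `N` vanishes
  set N : Matrix (Fin (n + 1)) (Fin (n + 1)) D := 1 - vecMulVec t (Pi.single l 1)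
  have hAN : A * N = A := by simp [N, Matrix.mul_sub, mul_vecMulVec, ht]
  have hNl : N l = 0 := by
    ext k
    by_cases hk : l = k
    · subst hk
      simp [N, vecMulVec_apply, htl]
    · simp [N, vecMulVec_apply, hk]
  refine ⟨fun i j => A j (l.succAbove i), fun i => N (l.succAbove i), fun j k => ?_⟩
  conv_lhs => rw [← hAN, mul_apply, Fin.sum_univ_succAbove _ l, hNl]
  simp

theorem eq_zero_of_three_roots {D : Type*} [DivisionRing D] {a b c x₁ x₂ x₃ : D}
    (h₁ : a * x₁ ^ 2 + b * x₁ + c = 0) (h₂ : a * x₂ ^ 2 + b * x₂ + c = 0)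
    (h₃ : a * x₃ ^ 2 + b * x₃ + c = 0) (hx₂ : ∀ y, Commute (x₂ ^ 2) y)
    (hx₃ : ∀ y, Commute (x₃ ^ 2) y) (h₁₂ : x₁ ≠ x₂) (h₁₃ : x₁ ≠ x₃) (h₂₃ : x₂ ^ 2 ≠ x₃ ^ 2) :
    a = 0 := by
  by_contra ha
  -- conjugating a root `d ≠ x₁` by `d - x₁` lands on an element independent of `d`
  have conj (d : D) (hd : a * d ^ 2 + b * d + c = 0) (hne : d ≠ x₁) :
      (d - x₁) * d * (d - x₁)⁻¹ = -(a⁻¹ * (a * x₁ + b)) := by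
    have hw : d - x₁ ≠ 0 := sub_ne_zero.mpr hne
    have key : (a * ((d - x₁) * d * (d - x₁)⁻¹) + (a * x₁ + b)) * (d - x₁) = 0 := by
      calc _ = a * ((d - x₁) * d) + (a * x₁ + b) * (d - x₁) := by
            rw [add_mul, mul_assoc a, inv_mul_cancel_right₀ hw]
        _ = (a * d ^ 2 + b * d + c) - (a * x₁ ^ 2 + b * x₁ + c) := by noncomm_ring
        _ = 0 := by rw [hd, h₁, sub_zero]
    rw [eq_neg_iff_add_eq_zero]
    calc _ = a⁻¹ * (a * ((d - x₁) * d * (d - x₁)⁻¹) + (a * x₁ + b)) := by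
          simp only [mul_add, inv_mul_cancel_left₀ ha]
      _ = 0 := by rw [(mul_eq_zero.mp key).resolve_right hw, mul_zero]
  have sq (d : D) (hd : ∀ y, Commute (d ^ 2) y) (hne : d ≠ x₁) :
      ((d - x₁) * d * (d - x₁)⁻¹) ^ 2 = d ^ 2 := by
    have hw : d - x₁ ≠ 0 := sub_ne_zero.mpr hne
    rw [pow_two, pow_two, show (d - x₁) * d * (d - x₁)⁻¹ * ((d - x₁) * d * (d - x₁)⁻¹) =
      (d - x₁) * (d * d) * (d - x₁)⁻¹ by simp [mul_assoc, hw], ← pow_two, (hd _).eq.symm,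
      mul_inv_cancel_right₀ hw]
  exact h₂₃ <| by rw [← sq x₂ hx₂ h₁₂.symm, ← sq x₃ hx₃ h₁₃.symm, conj x₂ h₂ h₁₂.symm,
    conj x₃ h₃ h₁₃.symm]

def IsQuasiEigen (M : 𝕄) (γ : ℍ) (v : Fin 3 → ℍ) : Prop :=
  (M *ᵥ v) 0 = γ * v 0 ∧ (M *ᵥ v) 1 = γ * v 1

theorem hasRankLE_mul_of_isQuasiEigen (M P : 𝕄) (γ : Fin 3 → ℍ)
    (h : ∀ m, IsQuasiEigen M (γ m) (P.col m)) : HasRankLE 4 (![P, M * P] : Fin 2 → 𝕄) := by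
  refine ⟨Fin.snoc (fun m => ![1, γ m]) ![0, 1], Fin.snoc P.col (Pi.single 2 1),
    Fin.snoc (fun m => Pi.single m 1) fun k => (M * P) 2 k - γ k * P 2 k,
    Fin.forall_fin_two.mpr ⟨fun j k => ?_, fun j k => ?_⟩⟩
  all_goals simp only [Fin.sum_univ_castSucc, Fin.snoc_castSucc, Fin.snoc_last]
  · fin_cases k <;> simp
  · have h0 : (M * P) 0 k = γ k * P 0 k := (h k).1
    have h1 : (M * P) 1 k = γ k * P 1 k := (h k).2
    fin_cases j <;> fin_cases k <;> simp_all

theorem hasRankLE_pencil_of_isQuasiEigen (M P : 𝕄) (hP : IsUnit P) (γ : Fin 3 → ℍ)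
    (h : ∀ m, IsQuasiEigen M (γ m) (P.col m)) : HasRankLE 4 (![1, M] : Fin 2 → 𝕄) := by
  have key : (![1, M] : Fin 2 → 𝕄) = fun i => ![P, M * P] i * (↑hP.unit⁻¹ : 𝕄) := by
    funext i
    fin_cases i <;> simp [Matrix.mul_assoc]
  rw [key]
  exact (hasRankLE_mul_of_isQuasiEigen M P γ h).mul_right _

theorem hasRankLE_pencil_of_submatrix (M : 𝕄) (e : Equiv.Perm (Fin 3))
    (h : HasRankLE 4 (![1, M.submatrix e e] : Fin 2 → 𝕄)) :
    HasRankLE 4 (![1, M] : Fin 2 → 𝕄) := by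
  have key : (![1, M] : Fin 2 → 𝕄) =
      fun i j k => ![1, M.submatrix e e] i (e.symm j) (e.symm k) := by
    funext i j k
    fin_cases i <;> simp [one_apply]
  rw [key]
  exact h.comp id e.symm e.symm

theorem exists_common_ratio_of_mul_ne (M : 𝕄) (hM : ¬(M 0 2 = 0 ∧ M 1 2 = 0)) {q z : ℍ}
    (hqz : z * q ≠ q * z) :
    ∃ v : Fin 3 → ℍ, v 0 ≠ 0 ∧ v 1 = v 0 * q ∧ (M *ᵥ v) 1 = (M *ᵥ v) 0 * q := by
  by_contra! hv
  let f : (Fin 3 → ℍ) →ₗ[ℝ] ℍ :=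
    { toFun := fun v => (M *ᵥ v) 1 - (M *ᵥ v) 0 * q
      map_add' := fun v w => by simp only [mulVec_add, Pi.add_apply]; noncomm_ring
      map_smul' := fun r v => by simp [mulVec_smul, smul_sub] }
  let H : ℍ →ₗ[ℝ] ℍ := f ∘ₗ (LinearMap.single ℝ (fun _ => ℍ) 0 +
    LinearMap.single ℝ (fun _ => ℍ) 1 ∘ₗ LinearMap.mulRight ℝ q)
  let G : ℍ →ₗ[ℝ] ℍ := f ∘ₗ LinearMap.single ℝ (fun _ => ℍ) 2
  -- `f (c, c q, 0) = f (0, 0, y)` forces `c = 0`, so `H` embeds `ℍ` into `ℍ ⧸ range G`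
  have hinj : Function.Injective ((LinearMap.range G).mkQ ∘ₗ H) := by
    refine (injective_iff_map_eq_zero _).mpr fun c hc => ?_
    obtain ⟨y, hy⟩ : H c ∈ LinearMap.range G := by
      simpa [Submodule.Quotient.mk_eq_zero] using hc
    by_contra hc0
    refine hv (Pi.single 0 c + Pi.single 1 (c * q) - Pi.single 2 y) (by simpa) (by simp) ?_
    have : f (Pi.single 0 c + Pi.single 1 (c * q) - Pi.single 2 y) = 0 := by
      rw [map_sub, map_add]
      simpa [H, G, sub_eq_zero] using hy.symm
    exact sub_eq_zero.mp this
  have hG : G = 0 := by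
    have h₁ := LinearMap.finrank_le_finrank_of_injective hinj
    have h₂ := Submodule.finrank_quotient_add_finrank (LinearMap.range G)
    exact LinearMap.range_eq_bot.mp (Submodule.finrank_eq_zero.mp (by omega))
  have hG' (y : ℍ) : M 1 2 * y = M 0 2 * y * q := by
    simpa [G, f, mulVec_single, sub_eq_zero] using LinearMap.congr_fun hG y
  have h02 : M 0 2 = 0 := by
    have h : M 0 2 * (z * q - q * z) = 0 := by
      have h1 := hG' 1
      rw [mul_one, mul_one] at h1
      rw [mul_sub, ← mul_assoc, ← mul_assoc, ← hG' z, h1, sub_self]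
    exact (mul_eq_zero.mp h).resolve_right (sub_ne_zero.mpr hqz)
  exact hM ⟨h02, by simpa [h02] using hG' 1⟩

theorem exists_quasiEigen_sq_eq (M : 𝕄) (hM : ¬(M 0 2 = 0 ∧ M 1 2 = 0)) {s : ℝ} (hs : s ≠ 0) :
    ∃ (v : Fin 3 → ℍ) (γ : ℍ), v 0 = 1 ∧ v 1 ^ 2 = ((-s ^ 2 : ℝ) : ℍ) ∧ IsQuasiEigen M γ v := by
  set q : ℍ := ⟨0, s, 0, 0⟩
  set z : ℍ := ⟨0, 0, 1, 0⟩
  have hq : q ^ 2 = ((-s ^ 2 : ℝ) : ℍ) := by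
    rw [pow_two]
    ext <;> simp only [Quaternion.re_mul, Quaternion.imI_mul, Quaternion.imJ_mul,
      Quaternion.imK_mul] <;> simp [q, pow_two]
  have hqz : z * q ≠ q * z := fun h => hs <| by
    have := congrArg QuaternionAlgebra.imK h
    simp only [Quaternion.imK_mul] at this
    simp only [q, z] at this
    linarith
  obtain ⟨v, hv0, hv1, hMv⟩ := exists_common_ratio_of_mul_ne M hM hqz
  refine ⟨v <• (v 0)⁻¹, (M *ᵥ v) 0 * (v 0)⁻¹, by simp [hv0], ?_, ?_, ?_⟩
  · simp only [Pi.smul_apply, MulOpposite.smul_eq_mul_unop, MulOpposite.unop_op, hv1]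
    rw [pow_two, show v 0 * q * (v 0)⁻¹ * (v 0 * q * (v 0)⁻¹) = v 0 * q ^ 2 * (v 0)⁻¹ by
      rw [pow_two]; simp [mul_assoc, hv0], hq, ← Quaternion.coe_commutes, mul_assoc,
      mul_inv_cancel₀ hv0, mul_one]
  · simp [mulVec_smul, hv0]
  · simp [mulVec_smul, hMv, hv1, mul_assoc, hv0]

theorem isUnit_of_notMem_span {p q t : Fin 3 → ℍ} (hp : p 0 = 1) (hq : q 0 = 1)
    (hpq : p 1 ≠ q 1) {a b : ℍ} (h0 : t 0 = a + b) (h1 : t 1 = p 1 * a + q 1 * b)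
    (h2 : t 2 ≠ p 2 * a + q 2 * b) : IsUnit (of ![p, q, t])ᵀ := by
  refine isUnit_of_mulVec_eq_zero fun s hs => ?_
  have e (j : Fin 3) : p j * s 0 + q j * s 1 + t j * s 2 = 0 := by
    simpa [mulVec, dotProduct, Fin.sum_univ_three] using congrFun hs j
  have hv : s 1 + b * s 2 = 0 := by
    have : (q 1 - p 1) * (s 1 + b * s 2) = 0 := by
      calc _ = (p 1 * s 0 + q 1 * s 1 + t 1 * s 2)
            - p 1 * (p 0 * s 0 + q 0 * s 1 + t 0 * s 2) := by rw [hp, hq, h0, h1]; noncomm_ring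
        _ = 0 := by rw [e 0, e 1, mul_zero, sub_zero]
    exact (mul_eq_zero.mp this).resolve_left (sub_ne_zero.mpr hpq.symm)
  have hu : s 0 + a * s 2 = 0 := by
    calc _ = (p 0 * s 0 + q 0 * s 1 + t 0 * s 2) - (s 1 + b * s 2) := by
          rw [hp, hq, h0]; noncomm_ring
      _ = 0 := by rw [e 0, hv, sub_zero]
  have hs2 : s 2 = 0 := by
    have : (t 2 - (p 2 * a + q 2 * b)) * s 2 = 0 := by
      calc _ = (p 2 * s 0 + q 2 * s 1 + t 2 * s 2) - p 2 * (s 0 + a * s 2)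
            - q 2 * (s 1 + b * s 2) := by noncomm_ring
        _ = 0 := by rw [e 2, hu, hv]; simp
    exact (mul_eq_zero.mp this).resolve_left (sub_ne_zero.mpr h2)
  funext m
  fin_cases m <;> simp_all

theorem isUnit_or_eq_add_smul {p q w : Fin 3 → ℍ} (hp : p 0 = 1) (hq : q 0 = 1) (hw : w 0 = 1)
    (hpq : p 1 ≠ q 1) : IsUnit (of ![p, q, w])ᵀ ∨ ∃ b : ℍ, w = p + (q - p) <• b := by
  set b := (q 1 - p 1)⁻¹ * (w 1 - p 1)
  have hb : (q 1 - p 1) * b = w 1 - p 1 := mul_inv_cancel_left₀ (sub_ne_zero.mpr hpq.symm) _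
  have h1 : w 1 = p 1 * (1 - b) + q 1 * b := by
    linear_combination (norm := noncomm_ring) -hb
  by_cases h2 : w 2 = p 2 * (1 - b) + q 2 * b
  · refine .inr ⟨b, funext fun j => ?_⟩
    simp only [Pi.add_apply, Pi.smul_apply, Pi.sub_apply, MulOpposite.smul_eq_mul_unop,
      MulOpposite.unop_op]
    fin_cases j
    · simp [hp, hq, hw]
    · simp only [Fin.mk_one, h1]
      noncomm_ring
    · simp only [Fin.reduceFinMk, h2]
      noncomm_ring
  · exact .inl (isUnit_of_notMem_span hp hq hpq (by rw [hw]; abel) h1 h2)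

theorem exists_quadratic_of_isQuasiEigen (M : 𝕄) {p q : Fin 3 → ℍ} (hp : p 0 = 1)
    (hq : q 0 = 1) (hpq : p 1 ≠ q 1) :
    ∃ B C : ℍ, ∀ (b γ : ℍ) (w : Fin 3 → ℍ), w = p + (q - p) <• b → IsQuasiEigen M γ w →
      ((M *ᵥ q) 0 - (M *ᵥ p) 0) * (q 1 - p 1)⁻¹ * w 1 ^ 2 + B * w 1 + C = 0 := by
  set d := q 1 - p 1
  set P₀ := (M *ᵥ p) 0
  set P₁ := (M *ᵥ p) 1
  set Q₀ := (M *ᵥ q) 0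
  set Q₁ := (M *ᵥ q) 1
  refine ⟨P₀ - (Q₀ - P₀) * d⁻¹ * p 1 - (Q₁ - P₁) * d⁻¹, (Q₁ - P₁) * d⁻¹ * p 1 - P₁,
    fun b γ w hw hwγ => ?_⟩
  have hb : d⁻¹ * w 1 - d⁻¹ * p 1 = b := by
    rw [← mul_sub, hw]
    simp [d, inv_mul_cancel_left₀ (sub_ne_zero.mpr hpq.symm)]
  have hM0 : (M *ᵥ w) 0 = P₀ + (Q₀ - P₀) * b := by
    simp [hw, mulVec_add, mulVec_smul, mulVec_sub, P₀, Q₀]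
  have hM1 : (M *ᵥ w) 1 = P₁ + (Q₁ - P₁) * b := by
    simp [hw, mulVec_add, mulVec_smul, mulVec_sub, P₁, Q₁]
  have hMw : (M *ᵥ w) 1 = (M *ᵥ w) 0 * w 1 := by
    rw [hwγ.2, hwγ.1, show w 0 = 1 by simp [hw, hp, hq], mul_one]
  calc _ = (P₀ + (Q₀ - P₀) * (d⁻¹ * w 1 - d⁻¹ * p 1)) * w 1
        - (P₁ + (Q₁ - P₁) * (d⁻¹ * w 1 - d⁻¹ * p 1)) := by noncomm_ring
    _ = 0 := by rw [hb, ← hM0, ← hM1, hMw, sub_self]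

theorem hasRankLE_pencil_of_isQuasiEigen_pair (M : 𝕄) {p q : Fin 3 → ℍ} (hp0 : p 0 = 1)
    (hq0 : q 0 = 1) (hpq : p 1 ≠ q 1) {γ : ℍ} (hp : IsQuasiEigen M γ p)
    (hq : IsQuasiEigen M γ q) : HasRankLE 4 (![1, M] : Fin 2 → 𝕄) := by
  -- `t = p a + q b + e₂`, whose top part is that of `-M e₂`, has quasi-eigenvalue `γ - 1`
  set b := (q 1 - p 1)⁻¹ * (p 1 * M 0 2 - M 1 2)
  set a := -M 0 2 - b
  have hab0 : a + b = -M 0 2 := by simp [a]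
  have hab1 : p 1 * a + q 1 * b = -M 1 2 := by
    have hb : (q 1 - p 1) * b = p 1 * M 0 2 - M 1 2 :=
      mul_inv_cancel_left₀ (sub_ne_zero.mpr hpq.symm) _
    rw [show a = -M 0 2 - b from rfl]
    linear_combination (norm := noncomm_ring) hb
  set t : Fin 3 → ℍ := p <• a + q <• b + Pi.single 2 1
  have ht0 : t 0 = a + b := by simp [t, hp0, hq0]
  have ht1 : t 1 = p 1 * a + q 1 * b := by simp [t]
  have ht2 : t 2 ≠ p 2 * a + q 2 * b := by simp [t]
  have ht : IsQuasiEigen M (γ - 1) t := by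
    have hMt : M *ᵥ t = (M *ᵥ p) <• a + (M *ᵥ q) <• b + M.col 2 := by
      simp [t, mulVec_add, mulVec_smul]
    constructor
    · rw [hMt, ht0]
      simp only [Pi.add_apply, Pi.smul_apply, MulOpposite.smul_eq_mul_unop, MulOpposite.unop_op,
        col_apply, hp.1, hq.1, hp0, hq0]
      linear_combination (norm := noncomm_ring) hab0
    · rw [hMt, ht1]
      simp only [Pi.add_apply, Pi.smul_apply, MulOpposite.smul_eq_mul_unop, MulOpposite.unop_op,
        col_apply, hp.2, hq.2]
      linear_combination (norm := noncomm_ring) hab1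
  refine hasRankLE_pencil_of_isQuasiEigen M _ (isUnit_of_notMem_span hp0 hq0 hpq ht0 ht1 ht2)
    ![γ, γ, γ - 1] fun m => ?_
  fin_cases m <;> simpa

theorem hasRankLE_pencil_or (M : 𝕄) :
    HasRankLE 4 (![1, M] : Fin 2 → 𝕄) ∨ (M 0 2 = 0 ∧ M 1 2 = 0) := by
  refine or_iff_not_imp_right.mpr fun hM => ?_
  obtain ⟨p, γ₁, hp0, hp1, hp⟩ := exists_quasiEigen_sq_eq M hM one_ne_zero
  obtain ⟨q, γ₂, hq0, hq1, hq⟩ := exists_quasiEigen_sq_eq M hM two_ne_zero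
  obtain ⟨w, γ₃, hw0, hw1, hw⟩ := exists_quasiEigen_sq_eq M hM three_ne_zero
  have hne {x y : ℍ} {s t : ℝ} (hx : x ^ 2 = ((-s ^ 2 : ℝ) : ℍ)) (hy : y ^ 2 = ((-t ^ 2 : ℝ) : ℍ))
      (hst : s ^ 2 ≠ t ^ 2) : x ^ 2 ≠ y ^ 2 := by
    rw [hx, hy, Ne, Quaternion.coe_inj, neg_inj]
    exact hst
  have hpq : p 1 ≠ q 1 := fun h => hne hp1 hq1 (by norm_num) (by rw [h])
  have hpw : p 1 ≠ w 1 := fun h => hne hp1 hw1 (by norm_num) (by rw [h])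
  rcases isUnit_or_eq_add_smul hp0 hq0 hw0 hpq with hP | ⟨b, hb⟩
  · exact hasRankLE_pencil_of_isQuasiEigen M _ hP ![γ₁, γ₂, γ₃] fun m => by
      fin_cases m <;> simpa
  obtain ⟨B, C, hQ⟩ := exists_quadratic_of_isQuasiEigen M hp0 hq0 hpq
  have hA := eq_zero_of_three_roots (hQ 0 γ₁ p (by simp) hp) (hQ 1 γ₂ q (by simp) hq)
    (hQ b γ₃ w hb hw) (fun y => hq1 ▸ Quaternion.coe_commute _ y)
    (fun y => hw1 ▸ Quaternion.coe_commute _ y) hpq hpw (hne hq1 hw1 (by norm_num))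
  have hγ : γ₁ = γ₂ := by
    rw [mul_eq_zero, sub_eq_zero, or_iff_left (inv_ne_zero (sub_ne_zero.mpr hpq.symm)), hq.1,
      hp.1, hp0, hq0, mul_one, mul_one] at hA
    exact hA.symm
  exact hasRankLE_pencil_of_isQuasiEigen_pair M hp0 hq0 hpq hp (hγ ▸ hq)

theorem hasRankLE_pencil (M : 𝕄) : HasRankLE 4 (![1, M] : Fin 2 → 𝕄) := by
  by_contra hM
  have hcol (e : Equiv.Perm (Fin 3)) : M (e 0) (e 2) = 0 ∧ M (e 1) (e 2) = 0 := by
    simpa using (hasRankLE_pencil_or (M.submatrix e e)).resolve_left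
      fun h => hM (hasRankLE_pencil_of_submatrix M e h)
  have h₁ : M 0 2 = 0 ∧ M 1 2 = 0 := hcol 1
  have h₂ : M 2 0 = 0 ∧ M 1 0 = 0 := hcol (Equiv.swap 0 2)
  have h₃ : M 0 1 = 0 ∧ M 2 1 = 0 := hcol (Equiv.swap 1 2)
  refine hM (hasRankLE_pencil_of_isQuasiEigen M 1 isUnit_one (fun m => M m m) fun m => ?_)
  have hcol1 : (1 : 𝕄).col m = Pi.single m 1 := by
    funext j
    simp [col_apply, one_apply, Pi.single_apply]
  rw [IsQuasiEigen, hcol1, mulVec_single_one]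
  fin_cases m <;> simp [h₁, h₂, h₃]

theorem hasRankLE_of_isUnit (A B : 𝕄) (hA : IsUnit A) : HasRankLE 4 (![A, B] : Fin 2 → 𝕄) := by
  have key : (![A, B] : Fin 2 → 𝕄) = fun i => ![1, B * (↑hA.unit⁻¹ : 𝕄)] i * A := by
    funext i
    fin_cases i <;> simp [Matrix.mul_assoc]
  rw [key]
  exact (hasRankLE_pencil _).mul_right A

theorem rank_le_four_233 (T : Fin 2 → Fin 3 → Fin 3 → Quaternion ℝ) :
    HasRankLE 4 T := by
  obtain ⟨A, B, rfl⟩ : ∃ A B : 𝕄, T = ![A, B] := ⟨T 0, T 1, by funext i; fin_cases i <;> rfl⟩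
  by_cases hA : ∀ v, A *ᵥ v = 0 → v = 0
  · exact hasRankLE_of_isUnit A B (isUnit_of_mulVec_eq_zero hA)
  by_cases hB : ∀ v, B *ᵥ v = 0 → v = 0
  · exact (hasRankLE_of_isUnit B A (isUnit_of_mulVec_eq_zero hB)).swap
  push Not at hA hB
  obtain ⟨s, hsA, hs⟩ := hA
  obtain ⟨s', hsB, hs'⟩ := hB
  obtain ⟨u, w, huw⟩ := exists_sum_of_mulVec_eq_zero A hs hsA
  obtain ⟨u', w', hu'w'⟩ := exists_sum_of_mulVec_eq_zero B hs' hsB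
  exact hasRankLE_of_slices huw hu'w'
end

section
/- The 3×2×3 quaternion tensor T whose two frontal slices are the 3×3 identity matrix and the matrix [[0,0,1],[0,1,0],[0,0,0]] does not have rank at most 3; that is, T cannot be written as a sum of 3 simple tensors over ℍ (hence, combined with the bound rank ≤ 4 for all 3×2×3 quaternion tensors, T has rank exactly 4). -/
open Matrix

/-! The frontal slices of a rank-`r` decomposition are `A * diagonal bⱼ * C` with `A` and `C`
independent of `j`. As the first slice is the identity, `A` is invertible with inverse
`diagonal b₀ * C`, so no `b₀ l` vanishes and the second slice `N` is conjugate to the diagonal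
matrix with entries `b₁ l * (b₀ l)⁻¹`. Over a domain a diagonal matrix with `D ^ 3 = D ^ 2` is
idempotent, whereas `N ^ 3 = N ^ 2 ≠ N`: on `e₃ ↦ e₁ ↦ 0` the matrix `N` is a nilpotent Jordan
block, which no diagonal matrix is conjugate to. -/

theorem isIdempotentElem_of_pow_three_eq_sq {R : Type*} [Ring R] [NoZeroDivisors R] {x : R}
    (h : x ^ 3 = x ^ 2) : IsIdempotentElem x := by
  have hfac : x ^ 2 * (x - 1) = 0 := by rw [mul_sub, mul_one, ← pow_succ, h, sub_self]
  rcases mul_eq_zero.mp hfac with hx | hx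
  · simp [pow_eq_zero_iff two_ne_zero |>.mp hx, IsIdempotentElem]
  · simp [sub_eq_zero.mp hx, IsIdempotentElem]

namespace Matrix

variable {n : Type*} [Fintype n] [DecidableEq n]

theorem isIdempotentElem_diagonal_of_pow_three_eq_sq {R : Type*} [Ring R] [NoZeroDivisors R]
    {d : n → R} (h : diagonal d ^ 3 = diagonal d ^ 2) : IsIdempotentElem (diagonal d) := by
  simp only [diagonal_pow, diagonal_eq_diagonal_iff] at h
  rw [IsIdempotentElem, diagonal_mul_diagonal]
  exact congrArg diagonal (funext fun l => isIdempotentElem_of_pow_three_eq_sq (h l))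

theorem isIdempotentElem_conj_diagonal_of_pow_three_eq_sq {R : Type*} [Ring R]
    [NoZeroDivisors R] (u : (Matrix n n R)ˣ) (d : n → R)
    (h : ((u : Matrix n n R) * diagonal d * (↑u⁻¹ : Matrix n n R)) ^ 3 =
      ((u : Matrix n n R) * diagonal d * (↑u⁻¹ : Matrix n n R)) ^ 2) :
    IsIdempotentElem ((u : Matrix n n R) * diagonal d * (↑u⁻¹ : Matrix n n R)) := by
  rw [Units.conj_pow, Units.conj_pow, Units.mul_left_inj, Units.mul_right_inj] at h
  rw [IsIdempotentElem, ← sq, Units.conj_pow, sq,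
    (isIdempotentElem_diagonal_of_pow_three_eq_sq h).eq]

theorem exists_units_conj_diagonal_of_mul_diagonal_mul_eq_one {K : Type*} [DivisionRing K]
    {A C : Matrix n n K} {b₀ : n → K} (h : A * diagonal b₀ * C = 1) (b₁ : n → K) :
    ∃ (u : (Matrix n n K)ˣ) (d : n → K),
      A * diagonal b₁ * C = (u : Matrix n n K) * diagonal d * (↑u⁻¹ : Matrix n n K) := by
  have hAinv : A * (diagonal b₀ * C) = 1 := by rwa [← mul_assoc]
  -- matrices over a division ring are Dedekind-finite (`IsStablyFiniteRing`)
  have hinvA : diagonal b₀ * C * A = 1 := mul_eq_one_comm.mp hAinv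
  have hb₀ : ∀ l, b₀ l ≠ 0 := by
    intro l hl
    have := congrFun (congrFun hinvA l) l
    rw [mul_apply] at this
    simp [diagonal_mul, hl] at this
  refine ⟨⟨A, diagonal b₀ * C, hAinv, hinvA⟩, fun l => b₁ l * (b₀ l)⁻¹, ?_⟩
  have hdiag : diagonal b₁ = diagonal (fun l => b₁ l * (b₀ l)⁻¹) * diagonal b₀ := by
    rw [diagonal_mul_diagonal]
    exact congrArg diagonal (funext fun l => (inv_mul_cancel_right₀ (hb₀ l) _).symm)
  simp only [hdiag, Units.inv_mk, mul_assoc]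

end Matrix

theorem HasRankLE.exists_slice_eq_mul_diagonal_mul {n₁ n₂ n₃ r : ℕ}
    {T : Fin n₁ → Fin n₂ → Fin n₃ → Quaternion ℝ} (h : HasRankLE r T) :
    ∃ (A : Matrix (Fin n₁) (Fin r) (Quaternion ℝ)) (b : Fin n₂ → Fin r → Quaternion ℝ)
      (C : Matrix (Fin r) (Fin n₃) (Quaternion ℝ)),
      ∀ j, Matrix.of (fun i k => T i j k) = A * diagonal (b j) * C := by
  obtain ⟨a, b, c, habc⟩ := h
  refine ⟨(Matrix.of a)ᵀ, fun j l => b l j, Matrix.of c, fun j => ?_⟩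
  ext i k : 1
  rw [mul_apply]
  simp [habc, mul_diagonal]

theorem not_rank_le_three_323 (T : Fin 3 → Fin 2 → Fin 3 → Quaternion ℝ)
    (hT : ∀ i j k, T i j k =
      if j = 0 then (1 : Matrix (Fin 3) (Fin 3) (Quaternion ℝ)) i k
      else !![(0 : Quaternion ℝ), 0, 1; 0, 1, 0; 0, 0, 0] i k) :
    ¬ HasRankLE 3 T := by
  intro hrank
  set N : Matrix (Fin 3) (Fin 3) (Quaternion ℝ) := !![0, 0, 1; 0, 1, 0; 0, 0, 0] with hN
  obtain ⟨A, b, C, hslice⟩ := hrank.exists_slice_eq_mul_diagonal_mul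
  have h₀ : A * diagonal (b 0) * C = 1 := by
    rw [← hslice]; ext i k : 1; simp [hT]
  have h₁ : A * diagonal (b 1) * C = N := by
    rw [← hslice]; ext i k : 1; simp [hT]
  obtain ⟨u, d, hconj⟩ := exists_units_conj_diagonal_of_mul_diagonal_mul_eq_one h₀ (b 1)
  rw [h₁] at hconj
  have hN3 : N ^ 3 = N ^ 2 := by
    rw [hN]; ext i k : 1
    fin_cases i <;> fin_cases k <;> simp [pow_succ, mul_apply, Fin.sum_univ_three]
  have hN2 : ¬ IsIdempotentElem N := by
    intro h
    have := congrFun (congrFun h 0) 2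
    simp [hN] at this
  exact hN2 (hconj ▸ isIdempotentElem_conj_diagonal_of_pow_three_eq_sq u d (hconj ▸ hN3))
end

section
/- Every 3×3×3 quaternion tensor T : Fin 3 → Fin 3 → Fin 3 → ℍ has rank at most 6, i.e. T can be written as a sum of 6 simple tensors. -/
/-!
Cut `T` into its three middle slices `M₀, M₁, M₂`.

If no slice is invertible, each has a nonzero left kernel vector, so it is a sum of two rank-one
matrices, and `T` is a sum of `3 · 2` simple tensors.

If, say, `M₀` is invertible, write `M₁ = M₀ G` and `M₂ = M₀ H`. Let `D` be diagonal with distinct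
real entries. Since `[X, D] + diag v` takes every value, the map
`(P, Q, v) ↦ (P Q, P D Q + diag v)` is a submersion at `(1, 1, 0)`, so its image contains
`(1 + ε G, D + ε H)` for some `ε ≠ 0`. Then every slice has the form
`M₀ · diag(β) · 1 + (M₀ P) · diag(γ) · Q`, so `T` is a sum of `3 + 3` simple tensors.
-/

open Matrix Filter Topology

theorem Matrix.isUnit_of_vecMul_injective {K m : Type*} [DivisionRing K] [Fintype m]
    [DecidableEq m] {A : Matrix m m K} (h : Function.Injective A.vecMul) : IsUnit A := by
  obtain ⟨B, hBA⟩ := vecMul_surjective_iff_exists_left_inverse.1 <|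
    LinearMap.surjective_of_injective (f := A.vecMulLinear) h
  exact IsUnit.of_mul_eq_one_right B hBA

theorem Matrix.exists_eq_mul_of_not_isUnit {K : Type*} [DivisionRing K] {n : ℕ}
    {A : Matrix (Fin (n + 1)) (Fin (n + 1)) K} (h : ¬IsUnit A) :
    ∃ (B : Matrix (Fin (n + 1)) (Fin n) K) (C : Matrix (Fin n) (Fin (n + 1)) K), A = B * C := by
  obtain ⟨w, hwA, hw⟩ : ∃ w, w ᵥ* A = 0 ∧ w ≠ 0 := by
    by_contra! hA
    exact h (isUnit_of_vecMul_injective ((injective_iff_map_eq_zero A.vecMulLinear).2 hA))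
  obtain ⟨i₀, hi₀⟩ := Function.ne_iff.1 hw
  -- Row `i₀` of `A` is a combination of the other rows, which form `C`.
  refine ⟨of fun i l => if i = i₀ then -(w i₀)⁻¹ * w (i₀.succAbove l)
    else if i = i₀.succAbove l then 1 else 0, A.submatrix i₀.succAbove id, ?_⟩
  ext i k
  obtain hi | ⟨l, rfl⟩ := Fin.eq_self_or_eq_succAbove i₀ i
  · subst i
    have hk := congrFun hwA k
    rw [vecMul, dotProduct, Fin.sum_univ_succAbove _ i₀, Pi.zero_apply] at hk
    simp [mul_apply, mul_assoc, ← Finset.mul_sum, eq_neg_of_add_eq_zero_right hk,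
      inv_mul_cancel_left₀ hi₀]
  · simp [mul_apply, Fin.succAbove_ne]

theorem Matrix.exists_mul_diagonal_sub_diagonal_mul_add_diagonal_eq {K 𝕜 n : Type*} [Field K]
    [Ring 𝕜] [Algebra K 𝕜] [Fintype n] [DecidableEq n] {d : n → K} (hd : Function.Injective d)
    (C : Matrix n n 𝕜) :
    ∃ (X : Matrix n n 𝕜) (v : n → 𝕜), X * diagonal (fun i => algebraMap K 𝕜 (d i)) -
      diagonal (fun i => algebraMap K 𝕜 (d i)) * X + diagonal v = C := by
  refine ⟨of fun i k => if i = k then 0 else (d k - d i)⁻¹ • C i k, fun i => C i i, ?_⟩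
  ext i k
  by_cases h : i = k
  · subst h
    simp
  · have hik : d k - d i ≠ 0 := sub_ne_zero.2 (hd.ne (Ne.symm h))
    simp [h, ← Algebra.commutes, ← Algebra.smul_def, ← sub_smul, smul_smul, ← mul_sub,
      inv_mul_cancel₀ hik]

theorem exists_mul_eq_one_add_smul_and_mul_mul_add_eq {A V : Type*} [NormedRing A]
    [NormedAlgebra ℝ A] [CompleteSpace A] [NormedAddCommGroup V] [NormedSpace ℝ V]
    [CompleteSpace V] (D : A) (σ : V →L[ℝ] A) (hσ : ∀ C : A, ∃ X v, X * D - D * X + σ v = C)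
    (G H : A) :
    ∃ ε : ℝ, ε ≠ 0 ∧ ∃ (P Q : A) (v : V), P * Q = 1 + ε • G ∧ P * D * Q + σ v = D + ε • H := by
  let F : A × A × V → A × A := fun y => (y.1 * y.2.1, y.1 * D * y.2.1 + σ y.2.2)
  have hP : HasStrictFDerivAt (fun y : A × A × V => y.1) _ (1, 1, 0) :=
    hasStrictFDerivAt_fst (𝕜 := ℝ)
  have hQ : HasStrictFDerivAt (fun y : A × A × V => y.2.1) _ (1, 1, 0) :=
    (hasStrictFDerivAt_snd (𝕜 := ℝ)).fst
  have hv : HasStrictFDerivAt (fun y : A × A × V => σ y.2.2) _ (1, 1, 0) :=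
    σ.hasStrictFDerivAt.comp _ (hasStrictFDerivAt_snd (𝕜 := ℝ)).snd
  -- The derivative at `(1, 1, 0)` is `(X, Y, v) ↦ (X + Y, X D + D Y + σ v)`, onto by `hσ`.
  have hF : map F (𝓝 (1, 1, 0)) = 𝓝 (1, D) := by
    have h := ((hP.fun_mul' hQ).prodMk (((hP.mul_const' D).fun_mul' hQ).add hv))
      |>.map_nhds_eq_of_surj ?_
    · simpa using h
    refine LinearMap.range_eq_top.2 fun BC => ?_
    obtain ⟨B, C⟩ := BC
    obtain ⟨X, v, hXv⟩ := hσ (C - D * B)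
    refine ⟨(X, B - X, v), ?_⟩
    rw [eq_sub_iff_add_eq] at hXv
    simp [← hXv, mul_sub]
    abel
  have hcurve : Tendsto (fun ε : ℝ => ((1 : A) + ε • G, D + ε • H)) (𝓝[≠] 0) (𝓝 (1, D)) := by
    refine tendsto_nhdsWithin_of_tendsto_nhds (Continuous.tendsto' ?_ 0 _ (by simp))
    fun_prop
  have hrange : Set.range F ∈ 𝓝 (1, D) := by
    rw [← hF, ← Set.image_univ]
    exact image_mem_map univ_mem
  obtain ⟨ε, ⟨⟨P, Q, v⟩, hPQv⟩, hε⟩ :=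
    ((hcurve.eventually_mem hrange).and self_mem_nhdsWithin).exists
  exact ⟨ε, hε, P, Q, v, congrArg Prod.fst hPQv, congrArg Prod.snd hPQv⟩

def middleSlice {n₁ n₂ n₃ : ℕ} (T : Fin n₁ → Fin n₂ → Fin n₃ → Quaternion ℝ) (j : Fin n₂) :
    Matrix (Fin n₁) (Fin n₃) (Quaternion ℝ) :=
  of fun i k => T i j k

namespace HasRankLE

variable {n₁ n₂ n₃ r s : ℕ} {T T' : Fin n₁ → Fin n₂ → Fin n₃ → Quaternion ℝ}

theorem of_sum {ι : Type*} [Fintype ι] (a : ι → Fin n₁ → Quaternion ℝ)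
    (b : ι → Fin n₂ → Quaternion ℝ) (c : ι → Fin n₃ → Quaternion ℝ)
    (h : ∀ i j k, T i j k = ∑ l, a l i * b l j * c l k) : HasRankLE (Fintype.card ι) T := by
  let e := Fintype.equivFin ι
  refine ⟨a ∘ e.symm, b ∘ e.symm, c ∘ e.symm, fun i j k => ?_⟩
  rw [h, ← e.symm.sum_comp]
  rfl

theorem add (h : HasRankLE r T) (h' : HasRankLE s T') : HasRankLE (r + s) (T + T') := by
  obtain ⟨a, b, c, h⟩ := h
  obtain ⟨a', b', c', h'⟩ := h'
  simpa using of_sum (Sum.elim a a') (Sum.elim b b') (Sum.elim c c') fun i j k => by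
    simp [h, h', Fintype.sum_sum_type]

theorem comp_middle {m : ℕ} (h : HasRankLE r T) (σ : Fin m → Fin n₂) :
    HasRankLE r fun i j k => T i (σ j) k :=
  let ⟨a, b, c, h⟩ := h
  ⟨a, fun l j => b l (σ j), c, fun i j k => h i (σ j) k⟩

theorem of_middleSlice_eq {ι : Type*} [Fintype ι] [DecidableEq ι]
    (A : Matrix (Fin n₁) ι (Quaternion ℝ)) (B : Matrix ι (Fin n₃) (Quaternion ℝ))
    (d : Fin n₂ → ι → Quaternion ℝ) (h : ∀ j, middleSlice T j = A * diagonal (d j) * B) :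
    HasRankLE (Fintype.card ι) T :=
  of_sum (fun l i => A i l) (fun l j => d j l) (fun l k => B l k) fun i j k => by
    have hjik := congrFun (congrFun (h j) i) k
    rw [mul_apply] at hjik
    simpa [middleSlice] using hjik

theorem of_middleSlice_eq_add {ι ι' : Type*} [Fintype ι] [DecidableEq ι] [Fintype ι']
    [DecidableEq ι'] (A : Matrix (Fin n₁) ι (Quaternion ℝ)) (B : Matrix ι (Fin n₃) (Quaternion ℝ))
    (d : Fin n₂ → ι → Quaternion ℝ) (A' : Matrix (Fin n₁) ι' (Quaternion ℝ))
    (B' : Matrix ι' (Fin n₃) (Quaternion ℝ)) (d' : Fin n₂ → ι' → Quaternion ℝ)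
    (h : ∀ j, middleSlice T j = A * diagonal (d j) * B + A' * diagonal (d' j) * B') :
    HasRankLE (Fintype.card ι + Fintype.card ι') T := by
  have h₁ := of_middleSlice_eq (T := fun i j k => (A * diagonal (d j) * B) i k) A B d
    fun _ => rfl
  have h₂ := of_middleSlice_eq (T := fun i j k => (A' * diagonal (d' j) * B') i k) A' B' d'
    fun _ => rfl
  convert h₁.add h₂
  funext i j k
  simpa [middleSlice] using congrFun (congrFun (h j) i) k

theorem of_middleSlice_eq_mul (B : Fin n₂ → Matrix (Fin n₁) (Fin r) (Quaternion ℝ))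
    (C : Fin n₂ → Matrix (Fin r) (Fin n₃) (Quaternion ℝ)) (h : ∀ j, middleSlice T j = B j * C j) :
    HasRankLE (n₂ * r) T := by
  simpa using of_sum (fun p : Fin n₂ × Fin r => fun i => B p.1 i p.2)
    (fun p j => if j = p.1 then 1 else 0) (fun p k => C p.1 p.2 k) fun i j k => by
      simpa [middleSlice, Fintype.sum_prod_type, mul_apply] using congrFun (congrFun (h j) i) k

theorem of_forall_not_isUnit_middleSlice {n : ℕ}
    {T : Fin (n + 1) → Fin n₂ → Fin (n + 1) → Quaternion ℝ}
    (h : ∀ j, ¬IsUnit (middleSlice T j)) : HasRankLE (n₂ * n) T := by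
  choose B C hBC using fun j => exists_eq_mul_of_not_isUnit (h j)
  exact of_middleSlice_eq_mul B C hBC

section

attribute [local instance] Matrix.linftyOpNormedRing Matrix.linftyOpNormedAlgebra

theorem of_isUnit_middleSlice_zero {n : ℕ} {T : Fin n → Fin 3 → Fin n → Quaternion ℝ}
    (h : IsUnit (middleSlice T 0)) : HasRankLE (n + n) T := by
  obtain ⟨N, hN⟩ := h.exists_right_inv
  have hM : ∀ j, middleSlice T j = middleSlice T 0 * (N * middleSlice T j) := fun j => by
    rw [← Matrix.mul_assoc, hN, Matrix.one_mul]
  set d : Fin n → Quaternion ℝ := fun i => algebraMap ℝ (Quaternion ℝ) i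
  obtain ⟨ε, hε, P, Q, v, hPQ, hPDQ⟩ := exists_mul_eq_one_add_smul_and_mul_mul_add_eq
    (diagonal d)
    ((diagonalLinearMap (Fin n) ℝ (Quaternion ℝ)).mkContinuous 1 fun v => by
      simp [linfty_opNorm_diagonal])
    (exists_mul_diagonal_sub_diagonal_mul_add_diagonal_eq (d := fun i : Fin n => (i : ℝ))
      (Nat.cast_injective.comp Fin.val_injective))
    (N * middleSlice T 1) (N * middleSlice T 2)
  replace hPDQ : P * diagonal d * Q + diagonal v = diagonal d + ε • (N * middleSlice T 2) := hPDQ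
  have hε' : ∀ G X : Matrix (Fin n) (Fin n) (Quaternion ℝ), ε • G = X → G = ε⁻¹ • X := by
    rintro G X rfl
    rw [smul_smul, inv_mul_cancel₀ hε, one_smul]
  -- `M₁ = ε⁻¹ M₀ (P Q - 1)` and `M₂ = ε⁻¹ M₀ (P D Q + diag v - D)`.
  simpa using of_middleSlice_eq_add (middleSlice T 0) 1 ![1, (-ε⁻¹) • 1, ε⁻¹ • (v - d)]
    (middleSlice T 0 * P) Q ![0, ε⁻¹ • 1, ε⁻¹ • d] fun
      | 0 => by simp
      | 1 => by
        rw [hM, hε' _ _ (eq_sub_of_add_eq' hPQ.symm)]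
        simp only [Matrix.cons_val, diagonal_smul, Pi.one_def, diagonal_one, Matrix.mul_smul,
          Matrix.smul_mul, Matrix.mul_one, Matrix.mul_sub, Matrix.mul_assoc]
        module
      | 2 => by
        have hvd : diagonal (v - d) = diagonal v - diagonal d := (diagonal_sub v d).symm
        rw [hM, hε' _ _ (eq_sub_of_add_eq' hPDQ.symm)]
        simp only [Matrix.cons_val, diagonal_smul, hvd, Matrix.mul_smul, Matrix.smul_mul,
          Matrix.mul_one, Matrix.mul_add, Matrix.mul_sub, Matrix.mul_assoc]
        module

end

end HasRankLE

theorem rank_le_six_333 (T : Fin 3 → Fin 3 → Fin 3 → Quaternion ℝ) :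
    HasRankLE 6 T := by
  by_cases h : ∃ j, IsUnit (middleSlice T j)
  · obtain ⟨j, hj⟩ := h
    have hT : HasRankLE (3 + 3) fun i j' k => T i (Equiv.swap 0 j j') k :=
      HasRankLE.of_isUnit_middleSlice_zero (by simpa [middleSlice] using hj)
    simpa using hT.comp_middle (Equiv.swap 0 j)
  · rw [not_exists] at h
    exact HasRankLE.of_forall_not_isUnit_middleSlice h
end
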